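/- arXiv:1008.4523 — 3 statements merged into one kernel-verified Lean document; each statement's English description precedes it below -/
import Mathlib

section
/- Let K have characteristic zero, let L be a Lie algebra over K with a totally ordered basis (X, ≤). Then the elements x₁ ⋯ xₙ in the universal enveloping algebra U(L), where n ≥ 1, xᵢ ∈ X and x₁ ≤ x₂ ≤ ⋯ ≤ xₙ, together with 1, form a K-basis of U(L). -/
/-!
Spanning: since `ι x * ι y - ι y * ι x = ι ⁅x, y⁆`, permuting the factors of a monomial in the
basis changes it only by monomials with fewer factors, so by induction on the number of factors
every monomial is a combination of sorted ones; and the span of the sorted monomials is stable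
under left multiplication by `ι L`, hence is all of `U(L)`.

Independence: `L` acts on the free module over sorted lists (a model of the symmetric algebra):
a basis element `x` acts on a sorted monomial `y t` by prepending when `x ≤ y`, and otherwise by
`x • (y t) = y • (x • t) + ⁅x, y⁆ • t`. That this is a Lie algebra representation is checked on
monomials by induction on their length, the essential case coming from the Jacobi identity. The
induced `U(L)`-module structure maps each sorted monomial, applied to the empty monomial, to the
corresponding basis vector of the free module.
-/

open UniversalEnvelopingAlgebra

attribute [local instance 100] LieRing.ofAssociativeRing

lemma LinearMap.IsAlt.eq_zero_of_basis_lt {ι R M N : Type*} [CommRing R] [AddCommGroup M]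
    [Module R M] [AddCommGroup N] [Module R N] [LinearOrder ι] {B : M →ₗ[R] M →ₗ[R] N}
    (hB : B.IsAlt) (b : Module.Basis ι R M) (h : ∀ i j, j < i → B (b i) (b j) = 0) : B = 0 :=
  LinearMap.ext_basis b b fun i j => by
    rcases lt_trichotomy i j with hij | rfl | hij
    · rw [← hB.neg, h j i hij, neg_zero]; rfl
    · exact hB _
    · exact h i j hij

lemma List.Pairwise.forall_le_of_le_head {α : Type*} [Preorder α] {x y : α} {t : List α}
    (h : (y :: t).Pairwise (· ≤ ·)) (hxy : x ≤ y) : ∀ a ∈ y :: t, x ≤ a := fun _ ha =>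
  (List.mem_cons.1 ha).elim (fun e => e ▸ hxy) fun ha => hxy.trans ((List.pairwise_cons.1 h).1 _ ha)

lemma Finsupp.mem_of_forall_single_one_mem {α R : Type*} [Semiring R]
    {P : Submodule R (α →₀ R)} {v : α →₀ R} (h : ∀ a ∈ v.support, single a 1 ∈ P) : v ∈ P := by
  have hv := Finsupp.mem_supported_support R v
  rw [Finsupp.supported_eq_span_single] at hv
  refine Submodule.span_le.2 ?_ hv
  rintro _ ⟨a, ha, rfl⟩
  exact h a ha

lemma Finsupp.exists_mem_support_of_mem_support_sum_smul {α β R : Type*} [Semiring R]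
    {f : α →₀ R} {g : α → β →₀ R} {y : β} (hy : y ∈ (f.sum fun a c => c • g a).support) :
    ∃ a ∈ f.support, y ∈ (g a).support := by
  classical
  obtain ⟨a, ha, hya⟩ := Finset.mem_biUnion.1 (Finsupp.support_sum hy)
  exact ⟨a, ha, Finsupp.support_smul hya⟩

section lieDefect

variable {R L M : Type*} [CommRing R] [LieRing L] [LieAlgebra R L] [AddCommGroup M] [Module R M]

def lieDefect (ρ : L →ₗ[R] Module.End R M) : L →ₗ[R] L →ₗ[R] Module.End R M :=
  LinearMap.mk₂ R (fun u w => ρ ⁅u, w⁆ - ⁅ρ u, ρ w⁆)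
    (fun u u' w => by simp only [add_lie, map_add]; abel)
    (fun c u w => by simp only [smul_lie, map_smul, smul_sub])
    (fun u w w' => by simp only [lie_add, map_add]; abel)
    (fun c u w => by simp only [lie_smul, map_smul, smul_sub])

variable (ρ : L →ₗ[R] Module.End R M)

lemma lieDefect_apply_eq_zero_iff (u w : L) (v : M) :
    lieDefect ρ u w v = 0 ↔ ρ ⁅u, w⁆ v = ρ u (ρ w v) - ρ w (ρ u v) := by
  rw [lieDefect, LinearMap.mk₂_apply, LinearMap.sub_apply, sub_eq_zero,
    LieRing.of_associative_ring_bracket]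
  rfl

lemma lieDefect_eq_zero_of_basis_lt {ι : Type*} [LinearOrder ι] (b : Module.Basis ι R L) {v : M}
    (h : ∀ i j, j < i → lieDefect ρ (b i) (b j) v = 0) (u w : L) : lieDefect ρ u w v = 0 := by
  have hAlt : ((lieDefect ρ).compr₂ (LinearMap.applyₗ v)).IsAlt := fun u => by simp [lieDefect]
  exact LinearMap.congr_fun₂ (hAlt.eq_zero_of_basis_lt b h) u w

-- This is where the Jacobi identity of `L` enters.
lemma lieDefect_apply_apply_eq_zero {x y z : L} {v : M}
    (hv : ∀ u w, lieDefect ρ u w v = 0) (hxz : lieDefect ρ x z (ρ y v) = 0)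
    (hyz : lieDefect ρ y z (ρ x v) = 0) : lieDefect ρ x y (ρ z v) = 0 := by
  simp only [lieDefect_apply_eq_zero_iff] at hv hxz hyz ⊢
  have jacobi : ρ ⁅⁅x, y⁆, z⁆ v = ρ ⁅x, ⁅y, z⁆⁆ v - ρ ⁅y, ⁅x, z⁆⁆ v := by
    rw [leibniz_lie x y z, map_add, LinearMap.add_apply, add_sub_cancel_right]
  have hxy := congrArg (ρ z) (hv x y)
  have hyz' := congrArg (ρ x) (hv y z)
  have hxz' := congrArg (ρ y) (hv x z)
  simp only [map_sub] at hxy hyz' hxz'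
  linear_combination (norm := abel)
    jacobi - hv ⁅x, y⁆ z + hv x ⁅y, z⁆ - hv y ⁅x, z⁆ + hxy + hyz' - hyz - hxz' + hxz

end lieDefect

namespace PBW

variable {K L X : Type*} [CommRing K] [LieRing L] [LieAlgebra K L] (b : Module.Basis X K L)

noncomputable def basisMonomial (k : List X) : UniversalEnvelopingAlgebra K L :=
  (k.map fun x => ι K (b x)).prod

@[simp] lemma basisMonomial_nil : basisMonomial b [] = 1 := rfl

@[simp] lemma basisMonomial_cons (x : X) (k : List X) :
    basisMonomial b (x :: k) = ι K (b x) * basisMonomial b k := rfl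

noncomputable def monomialSpanLT (n : ℕ) : Submodule K (UniversalEnvelopingAlgebra K L) :=
  Submodule.span K {a | ∃ k : List X, k.length < n ∧ basisMonomial b k = a}

lemma monomialSpanLT_mono : Monotone (monomialSpanLT (K := K) b) := fun _ _ hmn =>
  Submodule.span_mono fun _ ⟨k, hk, hka⟩ => ⟨k, by omega, hka⟩

lemma ι_mem_span_ι_basis (u : L) : ι K u ∈ Submodule.span K (Set.range fun x => ι K (b x)) := by
  have : ι K u ∈ (Submodule.span K (Set.range b)).map (ι K : L →ₗ⁅K⁆ _).toLinearMap := by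
    rw [b.span_eq]; exact ⟨u, trivial, rfl⟩
  rwa [Submodule.map_span, ← Set.range_comp] at this

lemma ι_mul_basisMonomial_mem (u : L) (k : List X) :
    ι K u * basisMonomial b k ∈ monomialSpanLT b (k.length + 2) := by
  refine Submodule.span_mono ?_ (Submodule.apply_mem_span_image_of_mem_span
    (LinearMap.mulRight K (basisMonomial b k)) (ι_mem_span_ι_basis b u))
  rintro _ ⟨_, ⟨x, rfl⟩, rfl⟩
  exact ⟨x :: k, by simp, rfl⟩

lemma ι_mul_mem_monomialSpanLT (u : L) {n : ℕ} {a : UniversalEnvelopingAlgebra K L}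
    (ha : a ∈ monomialSpanLT b n) : ι K u * a ∈ monomialSpanLT b (n + 1) := by
  have : (monomialSpanLT b n).map (LinearMap.mulLeft K (ι K u)) ≤ monomialSpanLT b (n + 1) := by
    rw [monomialSpanLT, Submodule.map_span_le]
    rintro _ ⟨k, hk, rfl⟩
    refine Submodule.span_mono ?_ (ι_mul_basisMonomial_mem b u k)
    rintro _ ⟨k', hk', rfl⟩
    exact ⟨k', by omega, rfl⟩
  exact this ⟨a, ha, rfl⟩

lemma basisMonomial_sub_mem_of_perm {k k' : List X} (h : k.Perm k') :
    basisMonomial b k - basisMonomial b k' ∈ monomialSpanLT b k.length := by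
  induction h with
  | nil => simp
  | cons x _ ih =>
    simpa [← mul_sub] using ι_mul_mem_monomialSpanLT b (b x) ih
  | swap x y k =>
    have hlie := LieHom.map_lie (ι K : L →ₗ⁅K⁆ UniversalEnvelopingAlgebra K L) (b y) (b x)
    rw [LieRing.of_associative_ring_bracket] at hlie
    have : basisMonomial b (y :: x :: k) - basisMonomial b (x :: y :: k) =
        ι K ⁅b y, b x⁆ * basisMonomial b k := by
      simp only [basisMonomial_cons, hlie, ← mul_assoc, sub_mul]
    rw [this]
    exact ι_mul_basisMonomial_mem b _ k
  | trans h₁₂ _ ih₁₂ ih₂₃ =>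
    rw [← sub_add_sub_cancel]
    exact add_mem ih₁₂ (h₁₂.length_eq ▸ ih₂₃)

abbrev SortedList (X : Type*) [LinearOrder X] := {l : List X // l.Pairwise (· ≤ ·)}

variable [LinearOrder X]

namespace SortedList

def nil : SortedList X := ⟨[], .nil⟩

def insert (x : X) (m : SortedList X) : SortedList X :=
  ⟨m.1.orderedInsert (· ≤ ·) x, m.2.orderedInsert x _⟩

lemma length_insert (x : X) (m : SortedList X) : (insert x m).1.length = m.1.length + 1 :=
  List.orderedInsert_length _ _ _

lemma insert_of_forall_le {x : X} {m : SortedList X} (hx : ∀ a ∈ m.1, x ≤ a) :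
    (insert x m).1 = x :: m.1 := by
  obtain ⟨_ | ⟨a, t⟩, h⟩ := m
  · rfl
  · exact List.orderedInsert_cons_of_le _ t (hx a List.mem_cons_self)

lemma le_of_mem_insert {x z : X} {m : SortedList X} (hzx : z ≤ x) (hzm : ∀ a ∈ m.1, z ≤ a) :
    ∀ a ∈ (insert x m).1, z ≤ a := by
  intro a ha
  rcases (List.mem_orderedInsert _).1 ha with rfl | ha
  exacts [hzx, hzm a ha]

end SortedList

noncomputable def sortedSpan : Submodule K (UniversalEnvelopingAlgebra K L) :=
  Submodule.span K (Set.range fun m : SortedList X => basisMonomial b m.1)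

lemma monomialSpanLT_le_sortedSpan (n : ℕ) : monomialSpanLT b n ≤ sortedSpan b := by
  induction n with
  | zero => exact Submodule.span_le.2 fun _ ⟨_, hk, _⟩ => absurd hk (Nat.not_lt_zero _)
  | succ n ih =>
    refine Submodule.span_le.2 ?_
    rintro _ ⟨k, hk, rfl⟩
    have hsort : basisMonomial b (k.insertionSort (· ≤ ·)) ∈ sortedSpan b :=
      Submodule.subset_span ⟨⟨_, List.pairwise_insertionSort _ k⟩, rfl⟩
    have hdiff := basisMonomial_sub_mem_of_perm b (List.perm_insertionSort (· ≤ ·) k).symm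
    rw [← sub_add_cancel (basisMonomial b k) (basisMonomial b (k.insertionSort (· ≤ ·)))]
    exact add_mem (ih (monomialSpanLT_mono b (Nat.lt_succ_iff.1 hk) hdiff)) hsort

lemma ι_mul_mem_sortedSpan (u : L) {a : UniversalEnvelopingAlgebra K L}
    (ha : a ∈ sortedSpan b) : ι K u * a ∈ sortedSpan b := by
  have : (sortedSpan b).map (LinearMap.mulLeft K (ι K u)) ≤ sortedSpan b := by
    rw [sortedSpan, Submodule.map_span_le]
    rintro _ ⟨m, rfl⟩
    exact monomialSpanLT_le_sortedSpan b _ (ι_mul_basisMonomial_mem b u m.1)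
  exact this ⟨a, ha, rfl⟩

lemma sortedSpan_eq_top : sortedSpan b = ⊤ := by
  suffices h : ∀ t : TensorAlgebra K L, ∀ a ∈ sortedSpan b, mkAlgHom K L t * a ∈ sortedSpan b by
    refine eq_top_iff.2 fun a _ => ?_
    obtain ⟨t, rfl⟩ : ∃ t, mkAlgHom K L t = a := RingCon.mkₐ_surjective (α := K) _ a
    simpa using h t 1 (Submodule.subset_span ⟨⟨[], .nil⟩, rfl⟩)
  intro t
  induction t using TensorAlgebra.induction with
  | algebraMap r => simpa [← Algebra.smul_def] using fun a ha => Submodule.smul_mem _ r ha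
  | ι u => exact fun a ha => ι_mul_mem_sortedSpan b u ha
  | mul t₁ t₂ h₁ h₂ => simpa [mul_assoc] using fun a ha => h₁ _ (h₂ a ha)
  | add t₁ t₂ h₁ h₂ => simpa [add_mul] using fun a ha => add_mem (h₁ a ha) (h₂ a ha)

open SortedList

-- The length guard only makes the recursion well founded: the one longer monomial in the support
-- of `basisAction b x t` is `insert x t`, on which `y` acts by insertion anyway.
noncomputable def basisAction (x : X) : SortedList X → (SortedList X →₀ K)
  | ⟨[], _⟩ => Finsupp.single (insert x nil) 1
  | ⟨y :: t, h⟩ =>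
    if x ≤ y then Finsupp.single (insert x ⟨y :: t, h⟩) 1
    else
      (basisAction x ⟨t, h.of_cons⟩).sum (fun m c => c •
        if m.1.length ≤ t.length then basisAction y m else Finsupp.single (insert y m) 1) +
      (b.repr ⁅b x, b y⁆).sum fun w c => c • basisAction w ⟨t, h.of_cons⟩
termination_by m => m.1.length

lemma basisAction_of_forall_le {x : X} {m : SortedList X} (hx : ∀ a ∈ m.1, x ≤ a) :
    basisAction b x m = Finsupp.single (insert x m) 1 := by
  obtain ⟨_ | ⟨y, t⟩, h⟩ := m
  · rw [basisAction]; rfl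
  · rw [basisAction, if_pos (hx y List.mem_cons_self)]

lemma basisAction_cons_of_lt {x y : X} {t : List X} (h : (y :: t).Pairwise (· ≤ ·)) (hyx : y < x) :
    basisAction b x ⟨y :: t, h⟩ =
      (basisAction b x ⟨t, h.of_cons⟩).sum (fun m c => c •
        if m.1.length ≤ t.length then basisAction b y m else Finsupp.single (insert y m) 1) +
      (b.repr ⁅b x, b y⁆).sum fun w c => c • basisAction b w ⟨t, h.of_cons⟩ := by
  rw [basisAction, if_neg hyx.not_ge]

lemma length_le_or_eq_insert_of_mem_support_basisAction : ∀ (x : X) (m : SortedList X),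
    ∀ m' ∈ (basisAction b x m).support, m'.1.length ≤ m.1.length ∨ m' = insert x m
  | x, ⟨[], _⟩, m', hm' => by
    rw [basisAction_of_forall_le b (by simp)] at hm'
    exact Or.inr (Finset.mem_singleton.1 (Finsupp.support_single_subset hm'))
  | x, ⟨y :: t, h⟩, m', hm' => by
    by_cases hxy : x ≤ y
    · rw [basisAction_of_forall_le b (h.forall_le_of_le_head hxy)] at hm'
      exact Or.inr (Finset.mem_singleton.1 (Finsupp.support_single_subset hm'))
    have hyx : y < x := lt_of_not_ge hxy
    rw [basisAction_cons_of_lt b h hyx] at hm'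
    rcases Finset.mem_union.1 (Finsupp.support_add hm') with hm' | hm'
    · obtain ⟨m'', hm'', hm'm''⟩ := Finsupp.exists_mem_support_of_mem_support_sum_smul hm'
      split_ifs at hm'm'' with hlen
      · left
        rcases length_le_or_eq_insert_of_mem_support_basisAction y m'' m' hm'm'' with hle | rfl
        · simp only [List.length_cons]; omega
        · simp only [length_insert, List.length_cons]; omega
      · right
        obtain rfl :=
          (length_le_or_eq_insert_of_mem_support_basisAction x _ m'' hm'').resolve_left hlen
        obtain rfl := Finset.mem_singleton.1 (Finsupp.support_single_subset hm'm'')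
        apply Subtype.ext
        rw [insert_of_forall_le (le_of_mem_insert hyx.le (List.pairwise_cons.1 h).1)]
        exact (List.orderedInsert_of_not_le _ t hxy).symm
    · left
      obtain ⟨w, -, hm'w⟩ := Finsupp.exists_mem_support_of_mem_support_sum_smul hm'
      rcases length_le_or_eq_insert_of_mem_support_basisAction w _ m' hm'w with hle | rfl
      · simp only [List.length_cons] at hle ⊢; omega
      · simp only [length_insert, List.length_cons]; omega
termination_by _ m => m.1.length

noncomputable def rep : L →ₗ[K] Module.End K (SortedList X →₀ K) :=
  b.constr K fun x => Finsupp.linearCombination K (basisAction b x)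

lemma rep_single (u : L) (m : SortedList X) :
    rep b u (Finsupp.single m 1) = (b.repr u).sum fun w c => c • basisAction b w m := by
  simp [rep, Module.Basis.constr_apply, Finsupp.sum, LinearMap.sum_apply]

lemma rep_basis_single (x : X) (m : SortedList X) :
    rep b (b x) (Finsupp.single m 1) = basisAction b x m := by
  simp [rep]

lemma rep_basis_cons_of_lt {x y : X} {t : List X} (h : (y :: t).Pairwise (· ≤ ·))
    (hyx : y < x) :
    rep b (b x) (Finsupp.single ⟨y :: t, h⟩ 1) =
      rep b (b y) (rep b (b x) (Finsupp.single ⟨t, h.of_cons⟩ 1)) +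
        rep b ⁅b x, b y⁆ (Finsupp.single ⟨t, h.of_cons⟩ 1) := by
  rw [rep_basis_single, basisAction_cons_of_lt b h hyx, rep_basis_single, rep_single]
  congr 1
  rw [rep, Module.Basis.constr_basis, Finsupp.linearCombination_apply]
  refine Finsupp.sum_congr fun m hm => ?_
  split_ifs with hlen
  · rfl
  obtain rfl :=
    (length_le_or_eq_insert_of_mem_support_basisAction b x _ m hm).resolve_left hlen
  rw [basisAction_of_forall_le b (le_of_mem_insert hyx.le (List.pairwise_cons.1 h).1)]

lemma rep_basis_single_of_forall_le {x : X} {m : SortedList X} (hx : ∀ a ∈ m.1, x ≤ a) :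
    rep b (b x) (Finsupp.single m 1) =
      Finsupp.single ⟨x :: m.1, List.pairwise_cons.2 ⟨hx, m.2⟩⟩ 1 := by
  rw [rep_basis_single, basisAction_of_forall_le b hx]
  congr
  exact Subtype.ext (insert_of_forall_le hx)

lemma lieDefect_basis_single_of_forall_le {x y : X} (hyx : y < x) {m : SortedList X}
    (hy : ∀ a ∈ m.1, y ≤ a) : lieDefect (rep b) (b x) (b y) (Finsupp.single m 1) = 0 := by
  rw [lieDefect_apply_eq_zero_iff, rep_basis_single_of_forall_le b hy,
    rep_basis_cons_of_lt b _ hyx]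
  abel

lemma lieDefect_basis_rep_basis_single {x y z : X} {t : SortedList X}
    (ih : ∀ m : SortedList X, m.1.length ≤ t.1.length →
      ∀ u w, lieDefect (rep b) u w (Finsupp.single m 1) = 0)
    (hzx : z < x) (hzy : z ≤ y) (hzt : ∀ a ∈ t.1, z ≤ a) :
    lieDefect (rep b) (b x) (b z) (rep b (b y) (Finsupp.single t 1)) = 0 := by
  rw [rep_basis_single]
  refine Finsupp.mem_of_forall_single_one_mem
    (P := LinearMap.ker (lieDefect (rep b) (b x) (b z))) fun m hm => ?_
  rcases length_le_or_eq_insert_of_mem_support_basisAction b y t m hm with hlen | rfl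
  · exact ih m hlen _ _
  · exact lieDefect_basis_single_of_forall_le b hzx (le_of_mem_insert hzy hzt)

lemma lieDefect_basis_single_cons {x y z : X} {t : List X} (h : (z :: t).Pairwise (· ≤ ·))
    (ih : ∀ m : SortedList X, m.1.length ≤ t.length →
      ∀ u w, lieDefect (rep b) u w (Finsupp.single m 1) = 0)
    (hyx : y < x) (hzy : z < y) :
    lieDefect (rep b) (b x) (b y) (Finsupp.single ⟨z :: t, h⟩ 1) = 0 := by
  have hzt : ∀ a ∈ t, z ≤ a := (List.pairwise_cons.1 h).1
  rw [← rep_basis_single_of_forall_le b (m := ⟨t, h.of_cons⟩) hzt]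
  exact lieDefect_apply_apply_eq_zero _ (ih _ le_rfl)
    (lieDefect_basis_rep_basis_single b ih (hzy.trans hyx) hzy.le hzt)
    (lieDefect_basis_rep_basis_single b ih hzy (hzy.trans hyx).le hzt)

theorem lieDefect_rep_single :
    ∀ (m : SortedList X) (u w : L), lieDefect (rep b) u w (Finsupp.single m 1) = 0
  | ⟨[], _⟩ => lieDefect_eq_zero_of_basis_lt _ b fun _ _ hyx =>
      lieDefect_basis_single_of_forall_le b hyx (by simp)
  | ⟨z :: t, h⟩ => lieDefect_eq_zero_of_basis_lt _ b fun x y hyx => by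
      by_cases hyz : y ≤ z
      · exact lieDefect_basis_single_of_forall_le b hyx (h.forall_le_of_le_head hyz)
      · exact lieDefect_basis_single_cons b h (fun m _ => lieDefect_rep_single m) hyx
          (lt_of_not_ge hyz)
termination_by m => m.1.length

noncomputable def repLieHom : L →ₗ⁅K⁆ Module.End K (SortedList X →₀ K) :=
  { rep b with
    map_lie' := fun {u w} => sub_eq_zero.1 <| Finsupp.basisSingleOne.ext fun m =>
      lieDefect_rep_single b m u w }

lemma lift_repLieHom_basisMonomial (m : SortedList X) :
    lift K (repLieHom b) (basisMonomial b m.1) (Finsupp.single nil 1) = Finsupp.single m 1 := by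
  obtain ⟨l, hl⟩ := m
  induction l with
  | nil => rw [basisMonomial_nil, map_one, Module.End.one_apply]; rfl
  | cons x t ih =>
    rw [basisMonomial_cons, map_mul, Module.End.mul_apply, ih hl.of_cons, lift_ι_apply]
    exact rep_basis_single_of_forall_le b (List.pairwise_cons.1 hl).1

lemma linearIndependent_basisMonomial :
    LinearIndependent K fun m : SortedList X => basisMonomial b m.1 := by
  refine LinearIndependent.of_comp
    (LinearMap.applyₗ (Finsupp.single nil 1) ∘ₗ (lift K (repLieHom b)).toLinearMap) ?_
  convert (Finsupp.basisSingleOne (R := K) (ι := SortedList X)).linearIndependent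
  ext m : 1
  simpa using lift_repLieHom_basisMonomial b m

end PBW

theorem stmt5_general {K L X : Type*} [Field K]
    [LieRing L] [LieAlgebra K L] [LinearOrder X] (b : Module.Basis X K L)
    (v : {l : List X // l.Pairwise (· ≤ ·)} → UniversalEnvelopingAlgebra K L)
    (hv : ∀ l, v l = (l.val.map fun x => (ι K : L →ₗ⁅K⁆ _) (b x)).prod) :
    LinearIndependent K v ∧ Submodule.span K (Set.range v) = ⊤ := by
  obtain rfl : v = fun m => PBW.basisMonomial b m.1 := funext hv
  exact ⟨PBW.linearIndependent_basisMonomial b, PBW.sortedSpan_eq_top b⟩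

/-- Poincaré–Birkhoff–Witt: if `char K = 0` and `L` is a Lie algebra over `K`
with a totally ordered basis `(X, ≤)`, then the products `x₁ ⋯ xₙ` in `U(L)` over
nondecreasing lists `x₁ ≤ ⋯ ≤ xₙ` of basis elements (the empty list giving `1`) form a
`K`-basis of `U(L)`. -/
theorem stmt5 {K L X : Type*} [Field K] [CharZero K]
    [LieRing L] [LieAlgebra K L] [LinearOrder X] (b : Module.Basis X K L)
    (v : {l : List X // l.Pairwise (· ≤ ·)} → UniversalEnvelopingAlgebra K L)
    (hv : ∀ l, v l = (l.val.map fun x => (ι K : L →ₗ⁅K⁆ _) (b x)).prod) :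
    LinearIndependent K v ∧ Submodule.span K (Set.range v) = ⊤ :=
  stmt5_general b v hv
end

section
/- Let B be a connected bialgebra over a field K with coradical filtration (B_n). Then the associated graded coalgebra gr B = ⊕_{n≥0} B_n/B_{n-1} is strictly graded; in particular its space of primitive elements equals the degree-one component B₁/B₀. -/
open TensorProduct

/-- The image of `S ⊗ T` inside `C ⊗ C`, for submodules `S, T` of `C`. -/
noncomputable def subTensor {K C : Type*} [Field K] [AddCommGroup C] [Module K C]
    (S T : Submodule K C) : Submodule K (C ⊗[K] C) :=
  LinearMap.range (TensorProduct.map S.subtype T.subtype)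

/-- A subcoalgebra of a coalgebra `C`: a submodule `S` with `Δ(S) ⊆ S ⊗ S`. -/
def IsSubcoalgebra {K C : Type*} [Field K] [AddCommGroup C] [Module K C] [Coalgebra K C]
    (S : Submodule K C) : Prop :=
  ∀ s ∈ S, Coalgebra.comul (R := K) s ∈ subTensor S S

/-- A simple subcoalgebra: a nonzero subcoalgebra with no nonzero proper subcoalgebra. -/
def IsSimpleSubcoalgebra {K C : Type*} [Field K] [AddCommGroup C] [Module K C] [Coalgebra K C]
    (S : Submodule K C) : Prop :=
  IsSubcoalgebra S ∧ S ≠ ⊥ ∧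
    ∀ T : Submodule K C, T ≤ S → IsSubcoalgebra T → T = ⊥ ∨ T = S

/-- The coradical of a coalgebra: the sum of all its simple subcoalgebras. -/
noncomputable def coradical (K C : Type*) [Field K] [AddCommGroup C] [Module K C]
    [Coalgebra K C] : Submodule K C :=
  ⨆ S ∈ {S : Submodule K C | IsSimpleSubcoalgebra S}, S

/-- The coradical filtration: `C_0` is the coradical and
`C_n = Δ⁻¹(C ⊗ C_{n-1} + C_0 ⊗ C)`. -/
noncomputable def coradFil (K C : Type*) [Field K] [AddCommGroup C] [Module K C]
    [Coalgebra K C] : ℕ → Submodule K C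
  | 0 => coradical K C
  | n + 1 => Submodule.comap (Coalgebra.comul (R := K))
      (subTensor ⊤ (coradFil K C n) ⊔ subTensor (coradical K C) ⊤)

/-- The coradical filtration shifted by one, with `C_{-1} = 0`. -/
noncomputable def coradPred (K C : Type*) [Field K] [AddCommGroup C] [Module K C]
    [Coalgebra K C] : ℕ → Submodule K C
  | 0 => ⊥
  | n + 1 => coradFil K C n

/-- The subspace `Σ_{i+j=n} (C_{i-1} ⊗ C_j + C_i ⊗ C_{j-1})` of `C ⊗ C`: an element `x` of
`C_n` has primitive class in the degree-`n` part of `gr C` iff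
`Δx - x ⊗ 1 - 1 ⊗ x` lies in this subspace. -/
noncomputable def grLower (K C : Type*) [Field K] [AddCommGroup C] [Module K C]
    [Coalgebra K C] (n : ℕ) : Submodule K (TensorProduct K C C) :=
  ⨆ i ∈ Finset.Iic n,
    (subTensor (coradPred K C i) (coradFil K C (n - i)) ⊔
      subTensor (coradFil K C i) (coradPred K C (n - i)))

/-! Since `B₀ = K·1` lies in every `B_n`, the filtration is increasing and each summand
`B_{i-1} ⊗ B_{n-i} + B_i ⊗ B_{n-i-1}` of the lower part in degree `n ≥ 2` lies in
`B ⊗ B_{n-2} + B₀ ⊗ B`. So if `x` has primitive class, then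
`Δx = (Δx - x ⊗ 1 - 1 ⊗ x) + x ⊗ 1 + 1 ⊗ x ∈ B ⊗ B_{n-2} + B₀ ⊗ B`, i.e. `x ∈ B_{n-1}`.
In degree one, `Δx = a ⊗ 1 + 1 ⊗ b` and the counit axioms give `a ≡ x ≡ b` modulo `K·1`,
whence `Δx - x ⊗ 1 - 1 ⊗ x ∈ B₀ ⊗ B₀`. -/

section SubTensor

variable {K C : Type*} [Field K] [AddCommGroup C] [Module K C]

lemma tmul_mem_subTensor {S T : Submodule K C} {s t : C} (hs : s ∈ S) (ht : t ∈ T) :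
    s ⊗ₜ[K] t ∈ subTensor S T :=
  ⟨⟨s, hs⟩ ⊗ₜ ⟨t, ht⟩, rfl⟩

lemma subTensor_eq_span (S T : Submodule K C) :
    subTensor S T = Submodule.span K {u | ∃ s ∈ S, ∃ t ∈ T, s ⊗ₜ[K] t = u} := by
  rw [subTensor, TensorProduct.range_map_eq_span_tmul]
  simp

lemma subTensor_mono {S S' T T' : Submodule K C} (hS : S ≤ S') (hT : T ≤ T') :
    subTensor S T ≤ subTensor S' T' := by
  rw [subTensor_eq_span S T, Submodule.span_le]
  rintro _ ⟨s, hs, t, ht, rfl⟩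
  exact tmul_mem_subTensor (hS hs) (hT ht)

lemma subTensor_top_span_singleton_le (e : C) :
    subTensor ⊤ (K ∙ e) ≤ LinearMap.range ((TensorProduct.mk K C C).flip e) := by
  rw [subTensor_eq_span, Submodule.span_le]
  rintro _ ⟨s, -, t, ht, rfl⟩
  obtain ⟨c, rfl⟩ := Submodule.mem_span_singleton.1 ht
  exact ⟨c • s, by simp⟩

lemma subTensor_span_singleton_top_le (e : C) :
    subTensor (K ∙ e) ⊤ ≤ LinearMap.range (TensorProduct.mk K C C e) := by
  rw [subTensor_eq_span, Submodule.span_le]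
  rintro _ ⟨s, hs, t, -, rfl⟩
  obtain ⟨c, rfl⟩ := Submodule.mem_span_singleton.1 hs
  exact ⟨c • t, by simp [smul_tmul']⟩

end SubTensor

section CoradicalFiltration

variable {K C : Type*} [Field K] [AddCommGroup C] [Module K C] [Coalgebra K C]

lemma coradical_le_comap_comul :
    coradical K C ≤ (subTensor (coradical K C) ⊤).comap (Coalgebra.comul (R := K)) :=
  iSup₂_le fun S hS s hs =>
    subTensor_mono (le_iSup₂ (f := fun S (_ : IsSimpleSubcoalgebra S) => S) S hS) le_top
      (hS.1 s hs)

lemma coradFil_monotone : Monotone (coradFil K C) := by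
  refine monotone_nat_of_le_succ fun n => ?_
  induction n with
  | zero => exact coradical_le_comap_comul.trans (Submodule.comap_mono le_sup_right)
  | succ n ih => exact Submodule.comap_mono (sup_le_sup_right (subTensor_mono le_rfl ih) _)

lemma coradical_le_coradFil (n : ℕ) : coradical K C ≤ coradFil K C n :=
  coradFil_monotone n.zero_le

lemma coradPred_le_coradFil {i j : ℕ} (h : i ≤ j + 1) : coradPred K C i ≤ coradFil K C j := by
  cases i with
  | zero => exact bot_le
  | succ i => exact coradFil_monotone (by omega)

lemma subTensor_coradical_le_grLower_one :
    subTensor (coradical K C) (coradical K C) ≤ grLower K C 1 :=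
  le_iSup₂_of_le 1 (by simp) le_sup_left

lemma grLower_add_two_le (m : ℕ) :
    grLower K C (m + 2) ≤ subTensor ⊤ (coradFil K C m) ⊔ subTensor (coradical K C) ⊤ := by
  refine iSup₂_le fun i _ => sup_le ?_ ?_
  · rcases Nat.lt_or_ge i 2 with hi | hi
    · exact le_sup_of_le_right
        (subTensor_mono (coradPred_le_coradFil (j := 0) (by omega)) le_top)
    · exact le_sup_of_le_left (subTensor_mono le_top (coradFil_monotone (by omega)))
  · rcases Nat.eq_zero_or_pos i with rfl | hi
    · exact le_sup_of_le_right (subTensor_mono le_rfl le_top)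
    · exact le_sup_of_le_left (subTensor_mono le_top (coradPred_le_coradFil (by omega)))

end CoradicalFiltration

section ConnectedCoalgebra

variable {K C : Type*} [Field K] [AddCommGroup C] [Module K C] [Coalgebra K C]

open Coalgebra

lemma comul_sub_mem_subTensor_coradical {g : C} (hg : counit (R := K) g = 1)
    (hC : coradical K C = K ∙ g) {x : C} (hx : x ∈ coradFil K C 1) :
    comul (R := K) x - x ⊗ₜ g - g ⊗ₜ x ∈ subTensor (coradical K C) (coradical K C) := by
  simp only [coradFil, Submodule.mem_comap, hC] at hx
  obtain ⟨_, hu, _, hv, hΔ⟩ := Submodule.mem_sup.1 hx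
  obtain ⟨a, rfl⟩ := subTensor_top_span_singleton_le g hu
  obtain ⟨b, rfl⟩ := subTensor_span_singleton_top_le g hv
  have hxa : counit (R := K) a • g + b = x := by
    simpa [← hΔ, hg] using
      LinearMap.congr_fun (lift_lsmul_comp_counit_comp_comul (R := K) (A := C)) x
  have hxb : a + counit (R := K) b • g = x := by
    simpa [← hΔ, hg] using congrArg (TensorProduct.rid K C) (lTensor_counit_comul (R := K) x)
  have hprim : comul (R := K) x - x ⊗ₜ g - g ⊗ₜ x =
      -(counit (R := K) a + counit (R := K) b) • (g ⊗ₜ[K] g) := by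
    rw [← hΔ]
    nth_rw 1 [← hxb]
    rw [← hxa]
    simp only [LinearMap.flip_apply, TensorProduct.mk_apply, add_tmul, tmul_add, ← smul_tmul',
      tmul_smul]
    module
  rw [hprim, hC]
  exact Submodule.smul_mem _ _ <|
    tmul_mem_subTensor (Submodule.mem_span_singleton_self g) (Submodule.mem_span_singleton_self g)

lemma mem_coradFil_succ_of_comul_sub_mem_grLower {g : C} (hg : g ∈ coradical K C) {m : ℕ}
    {x : C} (hx : comul (R := K) x - x ⊗ₜ g - g ⊗ₜ x ∈ grLower K C (m + 2)) :
    x ∈ coradFil K C (m + 1) := by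
  have hΔ : comul (R := K) x = (comul x - x ⊗ₜ g - g ⊗ₜ x) + x ⊗ₜ g + g ⊗ₜ x := by abel
  change comul (R := K) x ∈ subTensor ⊤ (coradFil K C m) ⊔ subTensor (coradical K C) ⊤
  rw [hΔ]
  refine add_mem (add_mem (grLower_add_two_le m hx) ?_) ?_
  · exact Submodule.mem_sup_left
      (tmul_mem_subTensor Submodule.mem_top (coradical_le_coradFil m hg))
  · exact Submodule.mem_sup_right (tmul_mem_subTensor hg Submodule.mem_top)

end ConnectedCoalgebra

/-- for a connected bialgebra `B`, the graded coalgebra `gr B` associated to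
the coradical filtration is strictly graded; in particular its primitives are exactly the
degree-one component `B₁/B₀`.  Concretely: every class of an element of `B₁` is primitive
in `gr B`, and for `n ≥ 2` an element of `B_n` whose class in `B_n/B_{n-1}` is primitive
already lies in `B_{n-1}`. -/
theorem stmt8 {K B : Type*} [Field K] [Ring B] [Bialgebra K B]
    (hconn : coradical K B = Submodule.span K {(1 : B)}) :
    (∀ x ∈ coradFil K B 1,
      Coalgebra.comul (R := K) x - x ⊗ₜ (1 : B) - (1 : B) ⊗ₜ x ∈ grLower K B 1) ∧
    (∀ n : ℕ, 2 ≤ n → ∀ x ∈ coradFil K B n,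
      Coalgebra.comul (R := K) x - x ⊗ₜ (1 : B) - (1 : B) ⊗ₜ x ∈ grLower K B n →
        x ∈ coradFil K B (n - 1)) := by
  refine ⟨fun x hx => subTensor_coradical_le_grLower_one
    (comul_sub_mem_subTensor_coradical Bialgebra.counit_one hconn hx), ?_⟩
  rintro n hn x - hprim
  obtain ⟨m, rfl⟩ := Nat.exists_eq_add_of_le' hn
  exact mem_coradFil_succ_of_comul_sub_mem_grLower (hconn ▸ Submodule.mem_span_singleton_self 1)
    hprim
end

section
/- Let K have prime characteristic p and let V be a K-vector space with totally ordered basis (X, ≤), regarded as a restricted Lie algebra with trivial bracket and trivial p-operation. In the restricted symmetric algebra 𝔰(V) = T(V)/(xy − yx, x^p : x, y ∈ V), the images of the monomials x₁^{t₁} ⋯ xₙ^{tₙ} with x₁ < x₂ < ⋯ < xₙ in X and 1 ≤ tᵢ ≤ p−1, together with 1, form a K-basis of 𝔰(V). -/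
/-- The defining relations of the restricted symmetric algebra
`𝔰(V) = T(V)/(xy - yx, x^p)`. -/
inductive RestrictedSymRel (K V : Type*) [Field K] [AddCommGroup V] [Module K V] (p : ℕ) :
    TensorAlgebra K V → TensorAlgebra K V → Prop
  | comm (x y : V) :
      RestrictedSymRel K V p (TensorAlgebra.ι K x * TensorAlgebra.ι K y)
        (TensorAlgebra.ι K y * TensorAlgebra.ι K x)
  | pow (x : V) : RestrictedSymRel K V p (TensorAlgebra.ι K x ^ p) 0

/-!
The relations make `𝔰(V)` commutative with `v ^ p = 0` for every `v ∈ V`. Since `v ↦ v ^ p` is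
additive in characteristic `p`, it is enough to impose `v ^ p = 0` on the basis vectors, so the
basis identifies `𝔰(V)` with the truncated polynomial algebra `K[X_x : x ∈ X] / (X_x ^ p)`. The
ideal `(X_x ^ p)` is a monomial ideal containing exactly the monomials with some exponent `≥ p`,
so the monomials with all exponents `< p` map to a basis of the quotient.
-/

namespace MvPolynomial

variable (σ R : Type*) (p : ℕ)

noncomputable def truncIdeal [CommSemiring R] : Ideal (MvPolynomial σ R) :=
  Ideal.span (Set.range fun i => X i ^ p)

variable {σ R p}

theorem mem_truncIdeal_iff [CommSemiring R] {q : MvPolynomial σ R} :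
    q ∈ truncIdeal σ R p ↔ ∀ d ∈ q.support, ∃ i, p ≤ d i := by
  have : Set.range (fun i => (X i : MvPolynomial σ R) ^ p) =
      (fun d => monomial d (1 : R)) '' Set.range fun i => Finsupp.single i p := by
    rw [← Set.range_comp]
    congr 1
    exact _root_.funext fun _ => X_pow_eq_monomial
  simp only [truncIdeal, this, mem_ideal_span_monomial_image, Set.exists_range_iff,
    Finsupp.single_le_iff]

theorem pow_char_mem_truncIdeal [CommSemiring R] [CharP R p] [Fact p.Prime] {q : MvPolynomial σ R}
    (hq : q ∈ Submodule.span R (Set.range X)) : q ^ p ∈ truncIdeal σ R p := by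
  induction hq using Submodule.span_induction with
  | mem _ h =>
    obtain ⟨i, rfl⟩ := h
    exact Ideal.subset_span ⟨i, rfl⟩
  | zero => simp [(Fact.out : p.Prime).ne_zero]
  | add q q' _ _ hq hq' => rw [add_pow_char]; exact add_mem hq hq'
  | smul c q _ hq => rw [smul_pow]; exact Submodule.smul_of_tower_mem _ _ hq

variable [CommRing R]

theorem mkₐ_monomial_eq_zero_of_le {d : σ →₀ ℕ} {i : σ} (h : p ≤ d i) :
    Ideal.Quotient.mkₐ R (truncIdeal σ R p) (monomial d 1) = 0 := by
  rw [Ideal.Quotient.mkₐ_eq_mk, Ideal.Quotient.eq_zero_iff_mem, mem_truncIdeal_iff]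
  exact fun d' hd' => ⟨i, (Finset.mem_singleton.mp (support_monomial_subset hd')) ▸ h⟩

theorem linearIndependent_mkₐ_monomial :
    LinearIndependent R fun t : {t : σ →₀ ℕ // ∀ i, t i < p} =>
      Ideal.Quotient.mkₐ R (truncIdeal σ R p) (monomial t.1 1) := by
  classical
  rw [linearIndependent_iff']
  intro s c hsum t ht
  set q := ∑ u ∈ s, monomial u.1 (c u)
  have hq : q ∈ truncIdeal σ R p := by
    rw [← Ideal.Quotient.eq_zero_iff_mem, ← Ideal.Quotient.mkₐ_eq_mk R, ← hsum, map_sum]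
    refine Finset.sum_congr rfl fun u _ => ?_
    rw [← map_smul, smul_monomial, smul_eq_mul, mul_one]
  have hcoeff : q.coeff t.1 = c t := by
    rw [coeff_sum, Finset.sum_eq_single_of_mem t ht fun u _ hut => ?_, coeff_monomial, if_pos rfl]
    rw [coeff_monomial, if_neg (Subtype.coe_ne_coe.mpr hut)]
  by_contra hct
  obtain ⟨i, hi⟩ := mem_truncIdeal_iff.mp hq t.1 (by rwa [mem_support_iff, hcoeff])
  exact (t.2 i).not_ge hi

theorem span_mkₐ_monomial_eq_top :
    Submodule.span R (Set.range fun t : {t : σ →₀ ℕ // ∀ i, t i < p} =>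
      Ideal.Quotient.mkₐ R (truncIdeal σ R p) (monomial t.1 1)) = ⊤ := by
  have hsurj := LinearMap.range_eq_top
    (f := (Ideal.Quotient.mkₐ R (truncIdeal σ R p)).toLinearMap)
    |>.mpr (Ideal.Quotient.mkₐ_surjective R _)
  rw [eq_top_iff, ← hsurj, ← Submodule.map_top, ← (basisMonomials σ R).span_eq,
    Submodule.map_span, Submodule.span_le, ← Set.range_comp, Set.range_subset_iff]
  intro d
  rw [Function.comp_apply, coe_basisMonomials, AlgHom.toLinearMap_apply, SetLike.mem_coe]
  by_cases hd : ∀ i, d i < p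
  · exact Submodule.subset_span ⟨⟨d, hd⟩, rfl⟩
  · obtain ⟨i, hi⟩ := not_forall.mp hd
    rw [mkₐ_monomial_eq_zero_of_le (not_lt.mp hi)]
    exact Submodule.zero_mem _

noncomputable def truncBasis :
    Module.Basis {t : σ →₀ ℕ // ∀ i, t i < p} R (MvPolynomial σ R ⧸ truncIdeal σ R p) :=
  .mk linearIndependent_mkₐ_monomial span_mkₐ_monomial_eq_top.ge

theorem truncBasis_apply (t : {t : σ →₀ ℕ // ∀ i, t i < p}) :
    truncBasis t = Ideal.Quotient.mkₐ R (truncIdeal σ R p) (monomial t.1 1) :=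
  Module.Basis.mk_apply _ _ _

end MvPolynomial

theorem Finset.prod_map_sort {α M : Type*} [LinearOrder α] [CommMonoid M] (s : Finset α)
    (f : α → M) : ((s.sort (· ≤ ·)).map f).prod = ∏ x ∈ s, f x := by
  rw [Finset.prod_eq_multiset_prod, ← Finset.sort_eq s (· ≤ ·), Multiset.map_coe,
    Multiset.prod_coe]

abbrev RestrictedSymAlgebra (K V : Type*) [Field K] [AddCommGroup V] [Module K V] (p : ℕ) :=
  RingQuot (RestrictedSymRel K V p)

namespace RestrictedSymAlgebra

open MvPolynomial

variable {K V : Type*} [Field K] [AddCommGroup V] [Module K V] {p : ℕ}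

noncomputable def ι : V →ₗ[K] RestrictedSymAlgebra K V p :=
  (RingQuot.mkAlgHom K (RestrictedSymRel K V p)).toLinearMap ∘ₗ TensorAlgebra.ι K

theorem ι_mul_comm (x : V) (a : RestrictedSymAlgebra K V p) : ι x * a = a * ι x := by
  obtain ⟨a, rfl⟩ := RingQuot.mkAlgHom_surjective K _ a
  induction a using TensorAlgebra.induction with
  | algebraMap r => rw [AlgHom.commutes, Algebra.commutes]
  | ι y =>
    have := RingQuot.mkAlgHom_rel K (RestrictedSymRel.comm (K := K) (p := p) x y)
    rwa [map_mul, map_mul] at this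
  | mul a c ha hc => rw [map_mul, ← mul_assoc, ha, mul_assoc, hc, mul_assoc]
  | add a c ha hc => rw [map_add, mul_add, add_mul, ha, hc]

theorem mul_comm' (a c : RestrictedSymAlgebra K V p) : a * c = c * a := by
  obtain ⟨a, rfl⟩ := RingQuot.mkAlgHom_surjective K _ a
  induction a using TensorAlgebra.induction with
  | algebraMap r => rw [AlgHom.commutes, Algebra.commutes]
  | ι y => exact ι_mul_comm y c
  | mul a d ha hd => rw [map_mul, mul_assoc, hd, ← mul_assoc, ha, mul_assoc]
  | add a d ha hd => rw [map_add, add_mul, mul_add, ha, hd]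

noncomputable instance : CommRing (RestrictedSymAlgebra K V p) where
  mul_comm := mul_comm'

theorem ι_pow_char (x : V) : ι x ^ p = (0 : RestrictedSymAlgebra K V p) := by
  have := RingQuot.mkAlgHom_rel K (RestrictedSymRel.pow (K := K) (p := p) x)
  rwa [map_pow, map_zero] at this

theorem algHom_ext {A : Type*} [Semiring A] [Algebra K A]
    {f g : RestrictedSymAlgebra K V p →ₐ[K] A}
    (h : f.toLinearMap ∘ₗ ι = g.toLinearMap ∘ₗ ι) : f = g :=
  RingQuot.ringQuot_ext' K f g (TensorAlgebra.hom_ext h)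

noncomputable def lift {A : Type*} [CommSemiring A] [Algebra K A] (f : V →ₗ[K] A)
    (hf : ∀ x, f x ^ p = 0) : RestrictedSymAlgebra K V p →ₐ[K] A :=
  RingQuot.liftAlgHom K ⟨TensorAlgebra.lift K f, fun _ _ h => by
    induction h with
    | comm x y => simp only [map_mul, TensorAlgebra.lift_ι_apply, mul_comm]
    | pow x => rw [map_pow, TensorAlgebra.lift_ι_apply, hf, map_zero]⟩

@[simp]
theorem lift_ι_apply {A : Type*} [CommSemiring A] [Algebra K A] (f : V →ₗ[K] A)
    (hf : ∀ x, f x ^ p = 0) (x : V) : lift f hf (ι x) = f x := by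
  simp [lift, ι]

section Basis

variable {σ : Type*} (p) (b : Module.Basis σ K V)

noncomputable def ofTrunc :
    MvPolynomial σ K ⧸ truncIdeal σ K p →ₐ[K] RestrictedSymAlgebra K V p :=
  Ideal.Quotient.liftₐ _ (aeval (ι ∘ b)) fun _ hq => by
    refine (Ideal.span_le (I := RingHom.ker (aeval (ι ∘ b)))).mpr ?_ hq
    rintro _ ⟨x, rfl⟩
    simp [ι_pow_char]

@[simp]
theorem ofTrunc_mk (q : MvPolynomial σ K) :
    ofTrunc p b (Ideal.Quotient.mk _ q) = aeval (ι ∘ b) q :=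
  rfl

variable [CharP K p] [Fact p.Prime]

noncomputable def toTrunc :
    RestrictedSymAlgebra K V p →ₐ[K] MvPolynomial σ K ⧸ truncIdeal σ K p :=
  lift ((Ideal.Quotient.mkₐ K _).toLinearMap ∘ₗ b.constr K (X : σ → MvPolynomial σ K)) fun v => by
    rw [LinearMap.comp_apply, AlgHom.toLinearMap_apply, ← map_pow, Ideal.Quotient.mkₐ_eq_mk,
      Ideal.Quotient.eq_zero_iff_mem]
    refine pow_char_mem_truncIdeal ?_
    rw [← b.constr_range K]
    exact LinearMap.mem_range_self _ v

noncomputable def truncEquiv :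
    (MvPolynomial σ K ⧸ truncIdeal σ K p) ≃ₐ[K] RestrictedSymAlgebra K V p :=
  .ofAlgHom (ofTrunc p b) (toTrunc p b)
    (algHom_ext (b.ext fun x => by simp [toTrunc]))
    (Ideal.Quotient.algHom_ext _ (MvPolynomial.algHom_ext fun x => by simp [toTrunc]))

theorem truncEquiv_mkₐ_monomial (t : σ →₀ ℕ) :
    truncEquiv p b (Ideal.Quotient.mkₐ K _ (monomial t 1)) = ∏ x ∈ t.support, ι (b x) ^ t x := by
  simp [truncEquiv, ← prod_X_pow_eq_monomial]

end Basis

end RestrictedSymAlgebra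

/-- in characteristic `p`, the images in `𝔰(V) = T(V)/(xy - yx, x^p)` of the
monomials `x₁^{t₁} ⋯ xₙ^{tₙ}` with `x₁ < ⋯ < xₙ` basis elements and `1 ≤ tᵢ ≤ p - 1`
(together with `1`, corresponding to the empty monomial) form a `K`-basis.  Such monomials
are indexed by finitely supported functions `t : X →₀ ℕ` with all values `< p`. -/
theorem stmt12 {K V X : Type*} [Field K] [AddCommGroup V] [Module K V]
    (p : ℕ) [Fact p.Prime] [CharP K p] [LinearOrder X] (b : Module.Basis X K V)
    (v : {t : X →₀ ℕ // ∀ x, t x < p} → RingQuot (RestrictedSymRel K V p))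
    (hv : ∀ t, v t = ((t.val.support.sort (· ≤ ·)).map fun x =>
      RingQuot.mkAlgHom K (RestrictedSymRel K V p) (TensorAlgebra.ι K (b x)) ^ t.val x).prod) :
    LinearIndependent K v ∧ Submodule.span K (Set.range v) = ⊤ := by
  let B := MvPolynomial.truncBasis.map (RestrictedSymAlgebra.truncEquiv p b).toLinearEquiv
  have hvB : v = B := funext fun t => by
    rw [hv, Finset.prod_map_sort, Module.Basis.map_apply, MvPolynomial.truncBasis_apply]
    exact (RestrictedSymAlgebra.truncEquiv_mkₐ_monomial p b t.1).symm
  exact hvB ▸ ⟨B.linearIndependent, B.span_eq⟩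
end
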